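/- For a BMS channel W with representative output symbols y₁,…,y_L ordered by likelihood ratio 1 ≤ LR(y₁) ≤ … ≤ LR(y_L), and any indices 1 ≤ i < j < k ≤ L, denoting by I(y_a, y_b) the capacity after merging y_a with y_b (and conjugates) via the degrading merge, at least one of I(y_i,y_j) ≥ I(y_i,y_k) or I(y_j,y_k) ≥ I(y_i,y_k) holds. That is, the best pair to merge among any triple is always a pair of LR-consecutive symbols, never the outer pair alone being strictly best. -/

import Mathlib

open scoped BigOperators

/-- `P : A → B → ℝ` is a channel: nonnegative entries, rows sum to 1. -/
def IsChannel {A B : Type*} [Fintype B] (P : A → B → ℝ) : Prop :=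
  (∀ a b, 0 ≤ P a b) ∧ ∀ a, ∑ b, P a b = 1

/-- Symmetric capacity of a binary-input channel. -/
noncomputable def Icap {Z : Type*} [Fintype Z] (Q : Bool → Z → ℝ) : ℝ :=
  ∑ z, ∑ x : Bool,
    (1 / 2) * Q x z * Real.logb 2 (Q x z / ((Q false z + Q true z) / 2))

/-- The degrading merge of symbols `w₁` and `w₂` (and their conjugates) of `W`:
the four merged symbols keep probability `0`, and the two new symbols
`inr false = z`, `inr true = z̄` get the summed probabilities. -/
noncomputable def mergeCh {Y : Type*} [DecidableEq Y]
    (W : Bool → Y → ℝ) (c : Y → Y) (w₁ w₂ : Y) : Bool → (Y ⊕ Bool) → ℝ :=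
  fun x s =>
    Sum.elim
      (fun y => if y = w₁ ∨ y = c w₁ ∨ y = w₂ ∨ y = c w₂ then 0 else W x y)
      (fun b : Bool => if b then W x (c w₁) + W x (c w₂) else W x w₁ + W x w₂) s

/-!
By the symmetry of `W`, an output with likelihood vector `v = (W(·|0), W(·|1))` contributes
`(v₁ + v₂ - H v / log 2) / 2` to the capacity, where `H v = (v₁ + v₂) h(v₁ / (v₁ + v₂))` and `h`
is the binary entropy in nats. So merging the outputs with vectors `v`, `w` lowers the capacity by
`(H (v + w) - H v - H w) / log 2`. The function `H` is concave and positively homogeneous on the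
quadrant, hence superadditive. If `v₂` lies between `v₁` and `v₃` in the likelihood-ratio order,
then `v₂ = a v₁ + b v₃` with `a, b ≥ 0`, and `b ≤ 1 + a` or `a ≤ 1 + b`. In the first case
`(1 + a)(v₁ + v₃) = (v₁ + v₂) + (1 + a - b) v₃` and `(1 + a) v₂ = a (v₁ + v₂) + b v₃`, and
superadditivity on these two splittings shows that merging `v₁` with `v₂` costs no more than
merging `v₁` with `v₃`; the second case is symmetric.
-/

open Real

lemma Prod.fst_add_snd_pos {v : ℝ × ℝ} (h : 0 ≤ v) (hv : v ≠ 0) : 0 < v.1 + v.2 := by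
  obtain ⟨h₁, h₂⟩ : 0 ≤ v.1 ∧ 0 ≤ v.2 := h
  by_contra! h'
  exact hv (Prod.ext (by change v.1 = 0; linarith) (by change v.2 = 0; linarith))

lemma Prod.eq_smul_of_cross_eq {v w : ℝ × ℝ} (hw : w.1 + w.2 ≠ 0) (h : v.1 * w.2 = w.1 * v.2) :
    v = ((v.1 + v.2) / (w.1 + w.2)) • w := by
  ext <;> simp only [Prod.smul_fst, Prod.smul_snd, smul_eq_mul] <;> field_simp <;> linarith

noncomputable def massEntropy (v : ℝ × ℝ) : ℝ := (v.1 + v.2) * binEntropy (v.1 / (v.1 + v.2))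

noncomputable def mergeLoss (v w : ℝ × ℝ) : ℝ :=
  massEntropy (v + w) - massEntropy v - massEntropy w

@[simp] lemma massEntropy_zero : massEntropy 0 = 0 := by simp [massEntropy]

lemma massEntropy_smul {t : ℝ} (ht : 0 ≤ t) (v : ℝ × ℝ) :
    massEntropy (t • v) = t * massEntropy v := by
  rcases ht.eq_or_lt with rfl | ht
  · simp
  · simp only [massEntropy, Prod.smul_fst, Prod.smul_snd, smul_eq_mul, ← mul_add,
      mul_div_mul_left _ _ ht.ne']
    ring

lemma massEntropy_add_massEntropy_le {v w : ℝ × ℝ} (hv : 0 ≤ v) (hw : 0 ≤ w) :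
    massEntropy v + massEntropy w ≤ massEntropy (v + w) := by
  rcases eq_or_ne v 0 with rfl | hv₀
  · simp
  rcases eq_or_ne w 0 with rfl | hw₀
  · simp
  obtain ⟨hp, hq⟩ : 0 ≤ v.1 ∧ 0 ≤ v.2 := hv
  obtain ⟨hp', hq'⟩ : 0 ≤ w.1 ∧ 0 ≤ w.2 := hw
  have hfrac {a b : ℝ} (ha : 0 ≤ a) (hb : 0 ≤ b) : a / (a + b) ∈ Set.Icc (0 : ℝ) 1 :=
    ⟨div_nonneg ha (add_nonneg ha hb),
      div_le_one_of_le₀ (le_add_of_nonneg_right hb) (add_nonneg ha hb)⟩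
  have hcancel {a b : ℝ} (ha : 0 ≤ a) (hb : 0 ≤ b) : (a + b) * (a / (a + b)) = a :=
    mul_div_cancel_of_imp' fun h => by linarith
  have hS := add_pos (Prod.fst_add_snd_pos ⟨hp, hq⟩ hv₀) (Prod.fst_add_snd_pos ⟨hp', hq'⟩ hw₀)
  -- concavity of `binEntropy` at the two posteriors, weighted by the output masses
  have key := strictConcave_binEntropy.concaveOn.2 (hfrac hp hq) (hfrac hp' hq')
    (div_nonneg (add_nonneg hp hq) hS.le) (div_nonneg (add_nonneg hp' hq') hS.le)
    (by rw [← add_div, div_self hS.ne'])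
  simp only [smul_eq_mul, div_mul_eq_mul_div, hcancel hp hq, hcancel hp' hq', ← add_div] at key
  rw [div_le_iff₀ hS] at key
  simp only [massEntropy, Prod.fst_add, Prod.snd_add, add_add_add_comm v.1 w.1]
  linarith

lemma mergeLoss_comm (v w : ℝ × ℝ) : mergeLoss v w = mergeLoss w v := by
  rw [mergeLoss, mergeLoss, add_comm v]
  ring

@[simp] lemma mergeLoss_zero_left (w : ℝ × ℝ) : mergeLoss 0 w = 0 := by simp [mergeLoss]

@[simp] lemma mergeLoss_zero_right (v : ℝ × ℝ) : mergeLoss v 0 = 0 := by simp [mergeLoss]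

lemma mergeLoss_smul_add_smul_le {v w : ℝ × ℝ} {a b : ℝ} (hv : 0 ≤ v) (hw : 0 ≤ w)
    (ha : 0 ≤ a) (hb : 0 ≤ b) (hba : b ≤ 1 + a) :
    mergeLoss v (a • v + b • w) ≤ mergeLoss v w := by
  have hu : 0 ≤ a • v + b • w := add_nonneg (smul_nonneg ha hv) (smul_nonneg hb hw)
  have ha' : 0 ≤ 1 + a := by linarith
  have h₁ := massEntropy_add_massEntropy_le (add_nonneg hv hu)
    (smul_nonneg (sub_nonneg.2 hba) hw)
  have h₂ := massEntropy_add_massEntropy_le (smul_nonneg ha (add_nonneg hv hu)) (smul_nonneg hb hw)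
  rw [show v + (a • v + b • w) + (1 + a - b) • w = (1 + a) • (v + w) by module,
    massEntropy_smul ha', massEntropy_smul (sub_nonneg.2 hba)] at h₁
  rw [show a • (v + (a • v + b • w)) + b • w = (1 + a) • (a • v + b • w) by module,
    massEntropy_smul ha', massEntropy_smul ha, massEntropy_smul hb] at h₂
  have : (1 + a) * mergeLoss v (a • v + b • w) ≤ (1 + a) * mergeLoss v w := by
    unfold mergeLoss
    linarith
  exact le_of_mul_le_mul_left this (by linarith)

lemma mergeLoss_le_or_le_of_eq_smul_add_smul {v w : ℝ × ℝ} {a b : ℝ} (hv : 0 ≤ v) (hw : 0 ≤ w)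
    (ha : 0 ≤ a) (hb : 0 ≤ b) :
    mergeLoss v (a • v + b • w) ≤ mergeLoss v w ∨ mergeLoss (a • v + b • w) w ≤ mergeLoss v w := by
  rcases le_total b (1 + a) with hba | hab
  · exact .inl (mergeLoss_smul_add_smul_le hv hw ha hb hba)
  · right
    have := mergeLoss_smul_add_smul_le hw hv hb ha (by linarith)
    rwa [add_comm (b • w), mergeLoss_comm w, mergeLoss_comm w] at this

lemma exists_eq_smul_add_smul {v₁ v₂ v₃ : ℝ × ℝ} (h₁ : 0 ≤ v₁) (h₂ : 0 ≤ v₂) (h₃ : 0 ≤ v₃)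
    (hv₁ : v₁ ≠ 0) (hv₃ : v₃ ≠ 0) (h₁₂ : v₁.1 * v₂.2 ≤ v₂.1 * v₁.2)
    (h₂₃ : v₂.1 * v₃.2 ≤ v₃.1 * v₂.2) (h₁₃ : v₁.1 * v₃.2 ≤ v₃.1 * v₁.2) :
    ∃ a b : ℝ, 0 ≤ a ∧ 0 ≤ b ∧ v₂ = a • v₁ + b • v₃ := by
  obtain ⟨hp₂, hq₂⟩ := h₂
  have hS₁ := Prod.fst_add_snd_pos h₁ hv₁
  have hS₃ := Prod.fst_add_snd_pos h₃ hv₃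
  rcases h₁₃.lt_or_eq with h₁₃ | h₁₃
  · have hD : 0 < v₃.1 * v₁.2 - v₁.1 * v₃.2 := sub_pos.2 h₁₃
    -- Cramer's rule
    refine ⟨(v₃.1 * v₂.2 - v₂.1 * v₃.2) / (v₃.1 * v₁.2 - v₁.1 * v₃.2),
      (v₂.1 * v₁.2 - v₁.1 * v₂.2) / (v₃.1 * v₁.2 - v₁.1 * v₃.2),
      div_nonneg (sub_nonneg.2 h₂₃) hD.le, div_nonneg (sub_nonneg.2 h₁₂) hD.le, ?_⟩
    ext <;> simp only [Prod.fst_add, Prod.snd_add, Prod.smul_fst, Prod.smul_snd, smul_eq_mul] <;>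
      rw [div_mul_eq_mul_div, div_mul_eq_mul_div, ← add_div, eq_div_iff hD.ne'] <;> ring
  · -- `v₁` and `v₃` are parallel, so `v₂`, squeezed between them, is parallel to both
    have hv₁ := Prod.eq_smul_of_cross_eq hS₃.ne' h₁₃
    have ht : 0 < (v₁.1 + v₁.2) / (v₃.1 + v₃.2) := div_pos hS₁ hS₃
    have h₃₂ : v₃.1 * v₂.2 ≤ v₂.1 * v₃.2 := by
      rw [hv₁] at h₁₂
      simp only [Prod.smul_fst, Prod.smul_snd, smul_eq_mul] at h₁₂
      exact le_of_mul_le_mul_left (by linarith) ht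
    refine ⟨0, _, le_rfl, div_nonneg (add_nonneg hp₂ hq₂) hS₃.le, ?_⟩
    rw [zero_smul, zero_add]
    exact Prod.eq_smul_of_cross_eq hS₃.ne' (le_antisymm h₂₃ h₃₂)

lemma mergeLoss_le_or_le {v₁ v₂ v₃ : ℝ × ℝ} (h₁ : 0 ≤ v₁) (h₂ : 0 ≤ v₂) (h₃ : 0 ≤ v₃)
    (h₁₂ : v₁.1 * v₂.2 ≤ v₂.1 * v₁.2) (h₂₃ : v₂.1 * v₃.2 ≤ v₃.1 * v₂.2)
    (h₁₃ : v₁.1 * v₃.2 ≤ v₃.1 * v₁.2) :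
    mergeLoss v₁ v₂ ≤ mergeLoss v₁ v₃ ∨ mergeLoss v₂ v₃ ≤ mergeLoss v₁ v₃ := by
  rcases eq_or_ne v₁ 0 with rfl | hv₁
  · simp
  rcases eq_or_ne v₃ 0 with rfl | hv₃
  · simp
  obtain ⟨a, b, ha, hb, rfl⟩ := exists_eq_smul_add_smul h₁ h₂ h₃ hv₁ hv₃ h₁₂ h₂₃ h₁₃
  exact mergeLoss_le_or_le_of_eq_smul_add_smul h₁ h₃ ha hb

noncomputable def capTerm (v : ℝ × ℝ) : ℝ :=
  1 / 2 * v.1 * logb 2 (v.1 / ((v.1 + v.2) / 2)) + 1 / 2 * v.2 * logb 2 (v.2 / ((v.1 + v.2) / 2))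

lemma Icap_eq_sum_capTerm {Z : Type*} [Fintype Z] (Q : Bool → Z → ℝ) :
    Icap Q = ∑ z, capTerm (Q false z, Q true z) := by
  refine Finset.sum_congr rfl fun z _ => ?_
  rw [Fintype.sum_bool, capTerm]
  ring

@[simp] lemma capTerm_zero : capTerm 0 = 0 := by simp [capTerm]

lemma capTerm_swap (v : ℝ × ℝ) : capTerm v.swap = capTerm v := by
  rw [capTerm, capTerm, Prod.fst_swap, Prod.snd_swap, add_comm v.2]
  ring

lemma massEntropy_eq {v : ℝ × ℝ} (hv : v.1 + v.2 ≠ 0) :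
    massEntropy v = -(v.1 * log (v.1 / (v.1 + v.2)) + v.2 * log (v.2 / (v.1 + v.2))) := by
  rw [massEntropy, binEntropy, log_inv, log_inv,
    show 1 - v.1 / (v.1 + v.2) = v.2 / (v.1 + v.2) by field_simp; ring]
  field_simp
  ring

lemma mul_logb_div_half {p s : ℝ} (hp : 0 ≤ p) (hs : 0 < s) :
    p * logb 2 (p / (s / 2)) = p + p * log (p / s) / log 2 := by
  rcases hp.eq_or_lt with rfl | hp
  · simp
  rw [show p / (s / 2) = 2 * (p / s) by field_simp, logb, log_mul two_ne_zero (by positivity)]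
  field_simp [(log_pos one_lt_two).ne']

lemma two_mul_capTerm {v : ℝ × ℝ} (hv : 0 ≤ v) :
    2 * capTerm v = v.1 + v.2 - massEntropy v / log 2 := by
  rcases eq_or_ne v 0 with rfl | hv₀
  · simp
  have hS := Prod.fst_add_snd_pos hv hv₀
  rw [massEntropy_eq hS.ne', capTerm]
  linear_combination mul_logb_div_half hv.1 hS + mul_logb_div_half hv.2 hS

lemma Icap_mergeCh_eq {Y : Type*} [Fintype Y] [DecidableEq Y] {W : Bool → Y → ℝ} {c : Y → Y}
    (hc : Function.Involutive c) (hsym : ∀ y, W true y = W false (c y))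
    {w₁ w₂ : Y} (h₁ : w₁ ≠ c w₁) (h₂ : w₂ ≠ c w₂) (h₁₂ : w₁ ≠ w₂) (h₁₂' : w₁ ≠ c w₂) :
    Icap (mergeCh W c w₁ w₂) = Icap W - 2 * capTerm (W false w₁, W true w₁)
      - 2 * capTerm (W false w₂, W true w₂)
      + 2 * capTerm (W false w₁ + W false w₂, W true w₁ + W true w₂) := by
  set col : Y → ℝ × ℝ := fun y => (W false y, W true y) with hcol
  set S : Finset Y := {w₁, c w₁, w₂, c w₂} with hS
  have hcol_c (y : Y) : col (c y) = (col y).swap := by simp [hcol, hsym, hc y]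
  have hinl (y : Y) :
      capTerm (mergeCh W c w₁ w₂ false (.inl y), mergeCh W c w₁ w₂ true (.inl y))
        = capTerm (col y) - if y ∈ S then capTerm (col y) else 0 := by
    split_ifs with hy <;> simp only [hS, Finset.mem_insert, Finset.mem_singleton] at hy
    · simp [mergeCh, hy, Prod.mk_zero_zero]
    · simp [mergeCh, hy, hcol]
  have hsumS : ∑ y ∈ S, capTerm (col y) = 2 * capTerm (col w₁) + 2 * capTerm (col w₂) := by
    have hc₁₂ : c w₁ ≠ w₂ := fun h => h₁₂' (by rw [← h, hc])
    rw [hS, Finset.sum_insert (by simp [h₁, h₁₂, h₁₂']),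
      Finset.sum_insert (by simp [hc₁₂, hc.injective.ne h₁₂]), Finset.sum_pair h₂, hcol_c, hcol_c,
      capTerm_swap, capTerm_swap]
    ring
  have hinr (b : Bool) :
      capTerm (mergeCh W c w₁ w₂ false (.inr b), mergeCh W c w₁ w₂ true (.inr b))
        = capTerm (W false w₁ + W false w₂, W true w₁ + W true w₂) := by
    cases b
    · rfl
    · rw [← capTerm_swap]
      simp [mergeCh, hsym, hc _]
  rw [Icap_eq_sum_capTerm, Icap_eq_sum_capTerm, Fintype.sum_sum_type, Fintype.sum_bool,
    Finset.sum_congr rfl fun y _ => hinl y, Finset.sum_sub_distrib, Finset.sum_ite_mem,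
    Finset.univ_inter, hsumS, hinr, hinr]
  ring

lemma Icap_mergeCh {Y : Type*} [Fintype Y] [DecidableEq Y] {W : Bool → Y → ℝ} {c : Y → Y}
    (hW : ∀ x y, 0 ≤ W x y) (hc : Function.Involutive c) (hsym : ∀ y, W true y = W false (c y))
    {w₁ w₂ : Y} (h₁ : w₁ ≠ c w₁) (h₂ : w₂ ≠ c w₂) (h₁₂ : w₁ ≠ w₂) (h₁₂' : w₁ ≠ c w₂) :
    Icap (mergeCh W c w₁ w₂) =
      Icap W - mergeLoss (W false w₁, W true w₁) (W false w₂, W true w₂) / log 2 := by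
  have hv₁ : 0 ≤ (W false w₁, W true w₁) := ⟨hW _ _, hW _ _⟩
  have hv₂ : 0 ≤ (W false w₂, W true w₂) := ⟨hW _ _, hW _ _⟩
  rw [Icap_mergeCh_eq hc hsym h₁ h₂ h₁₂ h₁₂', two_mul_capTerm hv₁, two_mul_capTerm hv₂,
    ← Prod.mk_add_mk, two_mul_capTerm (add_nonneg hv₁ hv₂), mergeLoss]
  simp only [Prod.fst_add, Prod.snd_add]
  ring

theorem degrade_consecutive_merge_optimal_general {Y : Type*} [Fintype Y] [DecidableEq Y]
    {L : ℕ} (W : Bool → Y → ℝ) (hW : IsChannel W)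
    (c : Y → Y) (hc : Function.Involutive c)
    (hsym : ∀ y, W true y = W false (c y))
    (y : Fin L → Y) (hinj : Function.Injective y)
    (hrep : ∀ a b : Fin L, y a ≠ c (y b))
    (hLRord : ∀ a b : Fin L, a ≤ b →
      W false (y a) * W false (c (y b)) ≤ W false (y b) * W false (c (y a)))
    (i j k : Fin L) (hij : i < j) (hjk : j < k) :
    Icap (mergeCh W c (y i) (y j)) ≥ Icap (mergeCh W c (y i) (y k)) ∨
    Icap (mergeCh W c (y j) (y k)) ≥ Icap (mergeCh W c (y i) (y k)) := by
  have hnonneg (a : Fin L) : 0 ≤ (W false (y a), W true (y a)) := ⟨hW.1 _ _, hW.1 _ _⟩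
  have hcross (a b : Fin L) (hab : a ≤ b) :
      W false (y a) * W true (y b) ≤ W false (y b) * W true (y a) := by
    simpa only [hsym] using hLRord a b hab
  have hmerge (a b : Fin L) (hab : a ≠ b) : Icap (mergeCh W c (y a) (y b)) =
      Icap W - mergeLoss (W false (y a), W true (y a)) (W false (y b), W true (y b)) / log 2 :=
    Icap_mergeCh hW.1 hc hsym (hrep a a) (hrep b b) (hinj.ne hab) (hrep a b)
  have hik := hij.trans hjk
  rw [hmerge i j hij.ne, hmerge i k hik.ne, hmerge j k hjk.ne]
  rcases mergeLoss_le_or_le (hnonneg i) (hnonneg j) (hnonneg k) (hcross i j hij.le)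
    (hcross j k hjk.le) (hcross i k hik.le) with h | h
  · exact .inl (by gcongr)
  · exact .inr (by gcongr)

/-- among any LR-ordered triple, merging one of the two
consecutive pairs is at least as good (in capacity) as merging the outer pair. -/
theorem degrade_consecutive_merge_optimal {Y : Type*} [Fintype Y] [DecidableEq Y]
    {L : ℕ} (W : Bool → Y → ℝ) (hW : IsChannel W)
    (c : Y → Y) (hc : Function.Involutive c) (hnofix : ∀ y, c y ≠ y)
    (hsym : ∀ y, W true y = W false (c y))
    (y : Fin L → Y) (hinj : Function.Injective y)
    (hrep : ∀ a b : Fin L, y a ≠ c (y b))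
    (hcover : ∀ w : Y, ∃ a : Fin L, w = y a ∨ w = c (y a))
    (hLRone : ∀ a : Fin L, W false (c (y a)) ≤ W false (y a))
    (hLRord : ∀ a b : Fin L, a ≤ b →
      W false (y a) * W false (c (y b)) ≤ W false (y b) * W false (c (y a)))
    (i j k : Fin L) (hij : i < j) (hjk : j < k) :
    Icap (mergeCh W c (y i) (y j)) ≥ Icap (mergeCh W c (y i) (y k)) ∨
    Icap (mergeCh W c (y j) (y k)) ≥ Icap (mergeCh W c (y i) (y k)) :=
  degrade_consecutive_merge_optimal_general W hW c hc hsym y hinj hrep hLRord i j k hij hjk
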